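/- Let U ⊆ V ⊆ R^d be submodules, ≺ a monomial order on R^d, G a Gröbner basis of U, and H = {h_1,…,h_t} ⊆ V∖U a finite set whose elements are supported on module monomials outside lm(U). Then the following are equivalent: (i) H is a Gröbner basis of V relative to U; (ii) H ∪ G is a Gröbner basis of V; (iii) every f ∈ V has a relative standard representation f = g + Σ_{i=1}^t q_i h_i with g ∈ U, q_i ∈ R, and lm(q_i h_i) ⪯ lm(f) for each i with q_i ≠ 0. -/

import Mathlib

attribute [local instance] Classical.propDecidable

noncomputable section

/-- Module monomial index: an exponent vector together with a component index. -/
abbrev ModMon (n d : ℕ) := (Fin n →₀ ℕ) × Fin d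

/-- The free module `R^d` over `R = k[X_1, …, X_n]`. -/
abbrev FreeMod (k : Type*) [Field k] (n d : ℕ) := Fin d → MvPolynomial (Fin n) k

variable {k : Type*} [Field k] {n d : ℕ}

/-- The module monomial `X^α e_i` as an element of `R^d`. -/
def mmVec (m : ModMon n d) : FreeMod k n d :=
  Pi.single m.2 (MvPolynomial.monomial m.1 (1 : k))

/-- The support of `f ∈ R^d` as a finite set of module monomials. -/
def suppF (f : FreeMod k n d) : Finset (ModMon n d) :=
  (Finset.univ : Finset (Fin d)).biUnion fun i =>
    ((f i).support.image fun a => ((a, i) : ModMon n d))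

/-- A monomial order on `R^d`: a well-founded total order on module monomials such that
`e_i ⪯ X^α e_i` and which is compatible with multiplication by monomials. -/
structure ModMonOrder (n d : ℕ) where
  toOrd : LinearOrder (ModMon n d)
  wf : WellFounded toOrd.lt
  base_le : ∀ (i : Fin d) (a : Fin n →₀ ℕ), toOrd.le (0, i) (a, i)
  add_le : ∀ (a b c : Fin n →₀ ℕ) (i j : Fin d),
    toOrd.le (b, i) (c, j) → toOrd.le (a + b, i) (a + c, j)

namespace ModMonOrder

variable (ord : ModMonOrder n d)

/-- The leading monomial of `f` (`⊥` if `f = 0`). -/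
def lmo (f : FreeMod k n d) : WithBot (ModMon n d) :=
  letI := ord.toOrd
  (suppF f).max

/-- The order on leading monomials, extended to `WithBot` (with `⊥` smallest). -/
def leB (x y : WithBot (ModMon n d)) : Prop :=
  WithBot.recBotCoe True
    (fun a => WithBot.recBotCoe False (fun b => ord.toOrd.le a b) y) x

/-- The leading coefficient of `f` (`0` if `f = 0`). -/
def lc (f : FreeMod k n d) : k :=
  WithBot.recBotCoe 0 (fun m => (f m.2).coeff m.1) (ord.lmo f)

/-- The leading monomial of `f`, as an element of `R^d` (`0` if `f = 0`). -/
def lmVec (f : FreeMod k n d) : FreeMod k n d :=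
  WithBot.recBotCoe 0 (fun m => mmVec m) (ord.lmo f)

/-- `lm(W)`: the submodule generated by the leading monomials of nonzero elements of `W`. -/
def lmSub (W : Submodule (MvPolynomial (Fin n) k) (FreeMod k n d)) :
    Submodule (MvPolynomial (Fin n) k) (FreeMod k n d) :=
  Submodule.span (MvPolynomial (Fin n) k) {v | ∃ f ∈ W, f ≠ 0 ∧ v = ord.lmVec f}

end ModMonOrder

/-- Divisibility in `R^d`: `u` divides `v` iff `v = p • u` for some polynomial `p`. -/
def dvdV (u v : FreeMod k n d) : Prop := ∃ p : MvPolynomial (Fin n) k, v = p • u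

/-- `G` is a Gröbner basis of the submodule `W ⊆ R^d`. -/
def IsGB (ord : ModMonOrder n d) (W : Submodule (MvPolynomial (Fin n) k) (FreeMod k n d))
    (G : Finset (FreeMod k n d)) : Prop :=
  Submodule.span (MvPolynomial (Fin n) k) (G : Set (FreeMod k n d)) = W ∧
  Submodule.span (MvPolynomial (Fin n) k) (ord.lmVec '' (G : Set (FreeMod k n d))) = ord.lmSub W

/-- `G` is the reduced Gröbner basis of `W ⊆ R^d`. -/
def IsRedGB (ord : ModMonOrder n d) (W : Submodule (MvPolynomial (Fin n) k) (FreeMod k n d))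
    (G : Finset (FreeMod k n d)) : Prop :=
  IsGB ord W G ∧
  (∀ g ∈ G, ∀ g' ∈ G, g ≠ g' → ¬ dvdV (ord.lmVec g) (ord.lmVec g')) ∧
  ∀ g ∈ G, ord.lc g = 1 ∧ ∀ m ∈ suppF (g - ord.lmVec g), mmVec m ∉ ord.lmSub W

/-- `p` is a normal form of `f` modulo `U`: `f - p ∈ U` and `p` is supported on
module monomials outside `lm(U)`. -/
def IsNF (ord : ModMonOrder n d) (U : Submodule (MvPolynomial (Fin n) k) (FreeMod k n d))
    (f p : FreeMod k n d) : Prop :=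
  f - p ∈ U ∧ ∀ m ∈ suppF p, mmVec m ∉ ord.lmSub U

/-- `H` is a Gröbner basis of `V` relative to `U`. -/
def IsRelGB (ord : ModMonOrder n d) (U V : Submodule (MvPolynomial (Fin n) k) (FreeMod k n d))
    (H : Finset (FreeMod k n d)) : Prop :=
  (H : Set (FreeMod k n d)) ⊆ (V : Set (FreeMod k n d)) \ (U : Set (FreeMod k n d)) ∧
  (∀ h ∈ H, ∀ m ∈ suppF h, mmVec m ∉ ord.lmSub U) ∧
  Submodule.span (MvPolynomial (Fin n) k) (ord.lmVec '' (H : Set (FreeMod k n d))) ⊔ ord.lmSub U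
    = ord.lmSub V

/-- `H` is a minimal Gröbner basis of `V` relative to `U`. -/
def IsMinRelGB (ord : ModMonOrder n d) (U V : Submodule (MvPolynomial (Fin n) k) (FreeMod k n d))
    (H : Finset (FreeMod k n d)) : Prop :=
  IsRelGB ord U V H ∧
  ∀ h ∈ H, ∀ h' ∈ H, h ≠ h' → ¬ dvdV (ord.lmVec h) (ord.lmVec h')

/-- `H` is the reduced Gröbner basis of `V` relative to `U`. -/
def IsRedRelGB (ord : ModMonOrder n d) (U V : Submodule (MvPolynomial (Fin n) k) (FreeMod k n d))
    (H : Finset (FreeMod k n d)) : Prop :=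
  IsMinRelGB ord U V H ∧
  ∀ h ∈ H, ord.lc h = 1 ∧ ∀ m ∈ suppF (h - ord.lmVec h), mmVec m ∉ ord.lmSub V

end

/-!
Because `G` is a Gröbner basis of `U`, the leading monomials of `H ∪ G` span `⟨lm H⟩ + lm(U)`;
this gives (i) ⇔ (ii), once we know that `H ∪ G` generates `V`, which follows from (iii).

(i) ⇒ (iii) is the division algorithm, by well-founded induction on `lm f`: the leading monomial
of `f ∈ V` lies in `lm(V)`, so it is a multiple of `lm s` for some `s ∈ H ∪ G`; subtracting a
monomial multiple of `s` strictly lowers the leading monomial, and the multiple is absorbed into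
`q_s` if `s ∈ H` and into `g ∈ U` if `s ∈ G`.

(iii) ⇒ (i): in a relative standard representation of `f`, either some `q_h h` has leading
monomial `lm f`, which is then a multiple of `lm h`, or no `q_h h` reaches `lm f`, and then
`lm g = lm f ∈ lm(U)`.
-/

section RelativeGroebner

open MvPolynomial

variable {k : Type*} [Field k] {n d : ℕ}

def mcoeff (m : ModMon n d) (f : FreeMod k n d) : k := (f m.2).coeff m.1

@[simp] lemma mcoeff_zero (m : ModMon n d) : mcoeff m (0 : FreeMod k n d) = 0 := coeff_zero _

@[simp] lemma mcoeff_add (m : ModMon n d) (f g : FreeMod k n d) :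
    mcoeff m (f + g) = mcoeff m f + mcoeff m g := coeff_add _ _ _

@[simp] lemma mcoeff_sub (m : ModMon n d) (f g : FreeMod k n d) :
    mcoeff m (f - g) = mcoeff m f - mcoeff m g := coeff_sub _ _ _ _

@[simp] lemma mcoeff_smul_const (m : ModMon n d) (c : k) (f : FreeMod k n d) :
    mcoeff m (c • f) = c * mcoeff m f := coeff_smul _ _ _

lemma mcoeff_sum {ι : Type*} (m : ModMon n d) (s : Finset ι) (F : ι → FreeMod k n d) :
    mcoeff m (∑ i ∈ s, F i) = ∑ i ∈ s, mcoeff m (F i) := by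
  simp [mcoeff, coeff_sum]

lemma mcoeff_mmVec (m m' : ModMon n d) :
    mcoeff m' (mmVec m : FreeMod k n d) = if m' = m then 1 else 0 := by
  obtain ⟨a, i⟩ := m
  obtain ⟨a', i'⟩ := m'
  by_cases hi : i' = i
  · subst hi
    simp [mcoeff, mmVec, coeff_monomial, eq_comm]
  · simp [mcoeff, mmVec, hi]

lemma mem_suppF_iff {m : ModMon n d} {f : FreeMod k n d} : m ∈ suppF f ↔ mcoeff m f ≠ 0 := by
  obtain ⟨a, i⟩ := m
  simp [suppF, mcoeff, and_comm]

lemma suppF_eq_empty_iff {f : FreeMod k n d} : suppF f = ∅ ↔ f = 0 := by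
  refine ⟨fun h => funext fun i => MvPolynomial.ext _ _ fun a => ?_,
    fun h => by ext m; simp [mem_suppF_iff, h]⟩
  by_contra hne
  exact Finset.notMem_empty (a, i) (h ▸ mem_suppF_iff.2 hne)

lemma monomial_smul_mmVec (a : Fin n →₀ ℕ) (m : ModMon n d) :
    monomial a (1 : k) • (mmVec m : FreeMod k n d) = mmVec (a + m.1, m.2) := by
  funext j
  by_cases hj : j = m.2
  · subst hj
    simp [mmVec, monomial_mul]
  · simp [mmVec, hj]

lemma exists_of_mem_suppF_smul {p : MvPolynomial (Fin n) k} {f : FreeMod k n d} {m : ModMon n d}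
    (hm : m ∈ suppF (p • f)) :
    ∃ a ∈ p.support, ∃ b, (b, m.2) ∈ suppF f ∧ m.1 = a + b := by
  rw [mem_suppF_iff, mcoeff, Pi.smul_apply, smul_eq_mul, coeff_mul] at hm
  obtain ⟨⟨a, b⟩, hab, hne⟩ := Finset.exists_ne_zero_of_sum_ne_zero hm
  exact ⟨a, mem_support_iff.2 (left_ne_zero_of_mul hne), b,
    mem_suppF_iff.2 (right_ne_zero_of_mul hne), (Finset.HasAntidiagonal.mem_antidiagonal.1 hab).symm⟩

namespace ModMonOrder

variable (ord : ModMonOrder n d)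

lemma lmo_eq_bot_iff {f : FreeMod k n d} : ord.lmo f = ⊥ ↔ f = 0 := by
  rw [lmo, @Finset.max_eq_bot _ ord.toOrd, suppF_eq_empty_iff]

@[simp] lemma lmo_zero : ord.lmo (0 : FreeMod k n d) = ⊥ := (ord.lmo_eq_bot_iff).2 rfl

lemma exists_lmo_eq_coe {f : FreeMod k n d} (hf : f ≠ 0) : ∃ m : ModMon n d, ord.lmo f = ↑m :=
  WithBot.ne_bot_iff_exists.1 ((ord.lmo_eq_bot_iff).not.2 hf) |>.imp fun _ h => h.symm

lemma mem_suppF_of_lmo_eq {f : FreeMod k n d} {m : ModMon n d} (h : ord.lmo f = ↑m) :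
    m ∈ suppF f :=
  @Finset.mem_of_max _ ord.toOrd _ _ h

lemma le_of_lmo_eq {f : FreeMod k n d} {m m' : ModMon n d} (h : ord.lmo f = ↑m)
    (h' : m' ∈ suppF f) : ord.toOrd.le m' m :=
  @Finset.le_max_of_eq _ ord.toOrd _ _ _ h' h

lemma lmo_eq_coe_iff {f : FreeMod k n d} {m : ModMon n d} :
    ord.lmo f = ↑m ↔ m ∈ suppF f ∧ ∀ m' ∈ suppF f, ord.toOrd.le m' m := by
  refine ⟨fun h => ⟨ord.mem_suppF_of_lmo_eq h, fun _ => ord.le_of_lmo_eq h⟩, fun ⟨hm, hle⟩ => ?_⟩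
  obtain ⟨m', hm'⟩ := ord.exists_lmo_eq_coe (f := f) (by rintro rfl; simp [mem_suppF_iff] at hm)
  rw [hm', ord.toOrd.le_antisymm _ _ (hle m' (ord.mem_suppF_of_lmo_eq hm'))
    (ord.le_of_lmo_eq hm' hm)]

lemma lmVec_eq {f : FreeMod k n d} {m : ModMon n d} (h : ord.lmo f = ↑m) :
    ord.lmVec f = mmVec m := by
  rw [lmVec, h]
  rfl

lemma leB_trans {x y z : WithBot (ModMon n d)} (hxy : ord.leB x y) (hyz : ord.leB y z) :
    ord.leB x z := by
  cases x <;> cases y <;> cases z <;> simp_all only [leB, WithBot.recBotCoe_bot,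
    WithBot.recBotCoe_coe]
  exact ord.toOrd.le_trans _ _ _ hxy hyz

def supportedLE (m : ModMon n d) : Submodule k (FreeMod k n d) where
  carrier := {f | ∀ m', ¬ ord.toOrd.le m' m → mcoeff m' f = 0}
  zero_mem' _ _ := mcoeff_zero _
  add_mem' hf hg m' hm' := by simp [hf m' hm', hg m' hm']
  smul_mem' c _ hf m' hm' := by simp [hf m' hm']

lemma mem_supportedLE {f : FreeMod k n d} {m : ModMon n d} :
    f ∈ ord.supportedLE m ↔ ∀ m' ∈ suppF f, ord.toOrd.le m' m := by
  simp only [supportedLE, Submodule.mem_mk, AddSubmonoid.mem_mk, AddSubsemigroup.mem_mk,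
    Set.mem_ofPred_eq, mem_suppF_iff]
  exact forall_congr' fun _ => not_imp_comm

lemma mem_supportedLE_of_lmo_eq {f : FreeMod k n d} {m : ModMon n d} (h : ord.lmo f = ↑m) :
    f ∈ ord.supportedLE m :=
  ord.mem_supportedLE.2 fun _ => ord.le_of_lmo_eq h

lemma lmo_eq_of_mem_supportedLE {f : FreeMod k n d} {m : ModMon n d}
    (hf : f ∈ ord.supportedLE m) (hm : m ∈ suppF f) : ord.lmo f = ↑m :=
  ord.lmo_eq_coe_iff.2 ⟨hm, ord.mem_supportedLE.1 hf⟩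

lemma leB_lmo_iff {f : FreeMod k n d} {m : ModMon n d} :
    ord.leB (ord.lmo f) ↑m ↔ f ∈ ord.supportedLE m := by
  obtain rfl | hf := eq_or_ne f 0
  · simp [leB]
  obtain ⟨m', hm'⟩ := ord.exists_lmo_eq_coe hf
  rw [hm', mem_supportedLE]
  exact ⟨fun h _ hm'' => ord.toOrd.le_trans _ _ _ (ord.le_of_lmo_eq hm' hm'') h,
    fun h => h m' (ord.mem_suppF_of_lmo_eq hm')⟩

lemma lmo_smul {q : MvPolynomial (Fin n) k} {s : FreeMod k n d} {ms : ModMon n d}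
    (hq : q ≠ 0) (hs : ord.lmo s = ↑ms) :
    ∃ a ∈ q.support, ord.lmo (q • s) = ↑((a + ms.1, ms.2) : ModMon n d) ∧
      mcoeff (a + ms.1, ms.2) (q • s) = q.coeff a * mcoeff ms s := by
  obtain ⟨a, ha, hmax⟩ := @Finset.exists_max_image _ _ ord.toOrd q.support
    (fun a => ((a + ms.1, ms.2) : ModMon n d)) (support_nonempty.2 hq)
  have hle : ∀ x ∈ q.support, ∀ b j, (b, j) ∈ suppF s →
      ord.toOrd.le (x + b, j) (a + ms.1, ms.2) := fun x hx b j hb =>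
    ord.toOrd.le_trans _ _ _ (ord.add_le x b ms.1 j ms.2 (ord.le_of_lmo_eq hs hb)) (hmax x hx)
  -- the top monomial `(a + ms.1, ms.2)` arises only from the product of the two leading terms
  have hunique : ∀ x ∈ q.support, ∀ b, (b, ms.2) ∈ suppF s → x + b = a + ms.1 →
      x = a ∧ b = ms.1 := by
    intro x hx b hb hxb
    have h1 := ord.add_le x b ms.1 ms.2 ms.2 (ord.le_of_lmo_eq hs hb)
    rw [hxb] at h1
    have hxa : x = a := add_right_cancel
      (congrArg Prod.fst (ord.toOrd.le_antisymm _ _ (hmax x hx) h1))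
    subst hxa
    exact ⟨rfl, add_left_cancel hxb⟩
  have hcoeff : mcoeff (a + ms.1, ms.2) (q • s) = q.coeff a * mcoeff ms s := by
    rw [mcoeff, Pi.smul_apply, smul_eq_mul, coeff_mul]
    refine Finset.sum_eq_single (a, ms.1) (fun ⟨x, b⟩ hxb hne => ?_)
      (fun h => (h (Finset.HasAntidiagonal.mem_antidiagonal.2 rfl)).elim)
    by_contra h0
    obtain ⟨rfl, rfl⟩ := hunique x (mem_support_iff.2 (left_ne_zero_of_mul h0)) b
      (mem_suppF_iff.2 (right_ne_zero_of_mul h0)) (Finset.HasAntidiagonal.mem_antidiagonal.1 hxb)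
    exact hne rfl
  refine ⟨a, ha, ord.lmo_eq_coe_iff.2 ⟨?_, fun m' hm' => ?_⟩, hcoeff⟩
  · rw [mem_suppF_iff, hcoeff]
    exact mul_ne_zero (mem_support_iff.1 ha) (mem_suppF_iff.1 (ord.mem_suppF_of_lmo_eq hs))
  · obtain ⟨x, hx, b, hb, hm'⟩ := exists_of_mem_suppF_smul hm'
    rw [← Prod.mk.eta (p := m'), hm']
    exact hle x hx b _ hb

lemma exists_lmo_dvd_of_mmVec_mem_span {T : Set (FreeMod k n d)} {m : ModMon n d}
    (hm : mmVec m ∈ Submodule.span (MvPolynomial (Fin n) k) (ord.lmVec '' T)) :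
    ∃ s ∈ T, ∃ ms : ModMon n d, ord.lmo s = ↑ms ∧ ∃ β, m = (β + ms.1, ms.2) := by
  obtain ⟨t, htT, c, hc⟩ := Submodule.mem_span_image_iff_exists_fun _ |>.1 hm
  have hne : mcoeff m (∑ s, c s • ord.lmVec (s : FreeMod k n d)) ≠ 0 := by
    rw [hc, mcoeff_mmVec, if_pos rfl]
    exact one_ne_zero
  rw [mcoeff_sum] at hne
  obtain ⟨⟨s, hst⟩, -, hs⟩ := Finset.exists_ne_zero_of_sum_ne_zero hne
  have hsT : s ∈ T := htT hst
  obtain ⟨ms, hms⟩ := ord.exists_lmo_eq_coe (f := s) (by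
    rintro rfl
    simp [lmVec] at hs)
  rw [ord.lmVec_eq hms] at hs
  obtain ⟨β, -, b, hb, hβ⟩ := exists_of_mem_suppF_smul (mem_suppF_iff.2 hs)
  rw [mem_suppF_iff, mcoeff_mmVec, ite_ne_right_iff] at hb
  obtain rfl := hb.1
  exact ⟨s, hsT, _, hms, β, Prod.ext hβ rfl⟩

lemma exists_smul_sub_lt {f s : FreeMod k n d} {ms : ModMon n d} {β : Fin n →₀ ℕ}
    (hf : ord.lmo f = ↑((β + ms.1, ms.2) : ModMon n d)) (hs : ord.lmo s = ↑ms) :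
    ∃ c : MvPolynomial (Fin n) k, ord.lmo (c • s) = ↑((β + ms.1, ms.2) : ModMon n d) ∧
      ∀ m' ∈ suppF (f - c • s), ord.toOrd.lt m' (β + ms.1, ms.2) := by
  set m : ModMon n d := (β + ms.1, ms.2)
  have hcs : mcoeff ms s ≠ 0 := mem_suppF_iff.1 (ord.mem_suppF_of_lmo_eq hs)
  have hc : mcoeff m f / mcoeff ms s ≠ 0 :=
    div_ne_zero (mem_suppF_iff.1 (ord.mem_suppF_of_lmo_eq hf)) hcs
  obtain ⟨a, ha, hlm, hcoeff⟩ :=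
    ord.lmo_smul ((monomial_eq_zero (s := β)).not.2 hc) hs
  rw [support_monomial, if_neg hc, Finset.mem_singleton] at ha
  subst ha
  refine ⟨_, hlm, fun m' hm' =>
    @lt_of_le_of_ne _ ord.toOrd.toPartialOrder _ _ ?_ ?_⟩
  · exact ord.mem_supportedLE.1 (Submodule.sub_mem _ (ord.mem_supportedLE_of_lmo_eq hf)
      (ord.mem_supportedLE_of_lmo_eq hlm)) m' hm'
  · rintro rfl
    rw [mem_suppF_iff, mcoeff_sub, hcoeff, coeff_monomial, if_pos rfl, div_mul_cancel₀ _ hcs,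
      sub_self] at hm'
    exact hm' rfl

lemma lmVec_mem_lmSub {W : Submodule (MvPolynomial (Fin n) k) (FreeMod k n d)}
    {f : FreeMod k n d} (hf : f ∈ W) (hf0 : f ≠ 0) : ord.lmVec f ∈ ord.lmSub W :=
  Submodule.subset_span ⟨f, hf, hf0, rfl⟩

lemma lmSub_mono {U V : Submodule (MvPolynomial (Fin n) k) (FreeMod k n d)} (hUV : U ≤ V) :
    ord.lmSub U ≤ ord.lmSub V :=
  Submodule.span_mono fun _ ⟨f, hf, hf0, hv⟩ => ⟨f, hUV hf, hf0, hv⟩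

end ModMonOrder

def HasRelStdRep (ord : ModMonOrder n d) (U : Submodule (MvPolynomial (Fin n) k) (FreeMod k n d))
    (H : Finset (FreeMod k n d)) (f : FreeMod k n d) : Prop :=
  ∃ g ∈ U, ∃ q : FreeMod k n d → MvPolynomial (Fin n) k,
    f = g + ∑ h ∈ H, q h • h ∧
    ∀ h ∈ H, q h ≠ 0 → ord.leB (ord.lmo (q h • h)) (ord.lmo f)

namespace HasRelStdRep

variable {ord : ModMonOrder n d} {U : Submodule (MvPolynomial (Fin n) k) (FreeMod k n d)}
  {H : Finset (FreeMod k n d)}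

lemma zero : HasRelStdRep ord U H 0 :=
  ⟨0, U.zero_mem, 0, by simp, fun _ _ hq => (hq rfl).elim⟩

lemma exists_mem_supportedLE {f : FreeMod k n d} {m : ModMon n d}
    (hrep : HasRelStdRep ord U H f) (hf : f ∈ ord.supportedLE m) :
    ∃ g ∈ U, ∃ q : FreeMod k n d → MvPolynomial (Fin n) k,
      f = g + ∑ h ∈ H, q h • h ∧ ∀ h ∈ H, q h • h ∈ ord.supportedLE m := by
  obtain ⟨g, hg, q, hfq, hq⟩ := hrep
  refine ⟨g, hg, q, hfq, fun h hh => ?_⟩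
  obtain hq0 | hq0 := eq_or_ne (q h) 0
  · rw [hq0, zero_smul]
    exact Submodule.zero_mem _
  · exact ord.leB_lmo_iff.1 (ord.leB_trans (hq h hh hq0) (ord.leB_lmo_iff.2 hf))

lemma of_mem_supportedLE {f g : FreeMod k n d} {m : ModMon n d} (hf : ord.lmo f = ↑m)
    (hg : g ∈ U) (q : FreeMod k n d → MvPolynomial (Fin n) k) (hfq : f = g + ∑ h ∈ H, q h • h)
    (hq : ∀ h ∈ H, q h • h ∈ ord.supportedLE m) : HasRelStdRep ord U H f :=
  ⟨g, hg, q, hfq, fun h hh _ => hf ▸ ord.leB_lmo_iff.2 (hq h hh)⟩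

end HasRelStdRep

namespace ModMonOrder

variable (ord : ModMonOrder n d)

theorem hasRelStdRep_of_lmSub_le {U V : Submodule (MvPolynomial (Fin n) k) (FreeMod k n d)}
    (hUV : U ≤ V) {G H : Finset (FreeMod k n d)} (hGU : ∀ s ∈ G, s ∈ U) (hHV : ∀ h ∈ H, h ∈ V)
    (hlm : ord.lmSub V ≤
      Submodule.span (MvPolynomial (Fin n) k) (ord.lmVec '' ↑(H ∪ G)))
    {f : FreeMod k n d} (hf : f ∈ V) : HasRelStdRep ord U H f := by
  obtain rfl | hf0 := eq_or_ne f 0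
  · exact HasRelStdRep.zero
  obtain ⟨m, hm⟩ := ord.exists_lmo_eq_coe hf0
  induction m using ord.wf.induction generalizing f with
  | _ m IH =>
  obtain ⟨s, hs, ms, hms, β, rfl⟩ :=
    ord.exists_lmo_dvd_of_mmVec_mem_span (hlm (ord.lmVec_eq hm ▸ ord.lmVec_mem_lmSub hf hf0))
  obtain ⟨c, hlmc, hlt⟩ := ord.exists_smul_sub_lt hm hms
  have hsV : s ∈ V := (Finset.mem_union.1 hs).elim (hHV s) (fun hsG => hUV (hGU s hsG))
  have hr : HasRelStdRep ord U H (f - c • s) := by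
    obtain hr0 | hr0 := eq_or_ne (f - c • s) 0
    · exact hr0 ▸ HasRelStdRep.zero
    obtain ⟨m', hm'⟩ := ord.exists_lmo_eq_coe hr0
    exact IH m' (hlt m' (ord.mem_suppF_of_lmo_eq hm'))
      (V.sub_mem hf (V.smul_mem c hsV)) hr0 hm'
  obtain ⟨g, hg, q, hrq, hq⟩ := hr.exists_mem_supportedLE
    (ord.mem_supportedLE.2 fun m' hm' => @le_of_lt _ ord.toOrd.toPreorder _ _ (hlt m' hm'))
  have hc := ord.mem_supportedLE_of_lmo_eq hlmc
  rcases Finset.mem_union.1 hs with hsH | hsG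
  · refine HasRelStdRep.of_mem_supportedLE hm hg (fun h => q h + if h = s then c else 0) ?_
      fun h hh => ?_
    · simp_rw [add_smul, ite_smul, zero_smul, Finset.sum_add_distrib, Finset.sum_ite_eq',
        if_pos hsH, ← add_assoc, ← hrq, sub_add_cancel]
    · rw [add_smul, ite_smul, zero_smul]
      exact Submodule.add_mem _ (hq h hh) (by split_ifs with h' <;> simp [h', hc])
  · refine HasRelStdRep.of_mem_supportedLE hm (U.add_mem hg (U.smul_mem c (hGU s hsG))) q ?_ hq
    rw [add_right_comm, ← hrq, sub_add_cancel]

theorem lmSub_le_of_hasRelStdRep {U V : Submodule (MvPolynomial (Fin n) k) (FreeMod k n d)}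
    {H : Finset (FreeMod k n d)} (hrep : ∀ f ∈ V, HasRelStdRep ord U H f) :
    ord.lmSub V ≤
      Submodule.span (MvPolynomial (Fin n) k) (ord.lmVec '' ↑H) ⊔ ord.lmSub U := by
  rw [lmSub, Submodule.span_le]
  rintro _ ⟨f, hfV, hf0, rfl⟩
  obtain ⟨m, hm⟩ := ord.exists_lmo_eq_coe hf0
  obtain ⟨g, hg, q, hfq, hq⟩ :=
    (hrep f hfV).exists_mem_supportedLE (ord.mem_supportedLE_of_lmo_eq hm)
  have hfm : mcoeff m f ≠ 0 := mem_suppF_iff.1 (ord.mem_suppF_of_lmo_eq hm)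
  rw [SetLike.mem_coe, ord.lmVec_eq hm]
  by_cases hH : ∃ h ∈ H, mcoeff m (q h • h) ≠ 0
  · obtain ⟨h, hh, hqh⟩ := hH
    have hlm : ord.lmo (q h • h) = ↑m :=
      ord.lmo_eq_of_mem_supportedLE (hq h hh) (mem_suppF_iff.2 hqh)
    obtain ⟨mh, hmh⟩ := ord.exists_lmo_eq_coe (f := h) (by rintro rfl; simp at hqh)
    obtain ⟨a, -, hlm', -⟩ := ord.lmo_smul (q := q h) (by rintro h0; simp [h0] at hqh) hmh
    rw [hlm, WithBot.coe_inj] at hlm'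
    rw [hlm', ← monomial_smul_mmVec, ← ord.lmVec_eq hmh]
    exact Submodule.mem_sup_left (Submodule.smul_mem _ _ (Submodule.subset_span ⟨h, hh, rfl⟩))
  · push Not at hH
    have hgm : mcoeff m g = mcoeff m f := by
      rw [hfq, mcoeff_add, mcoeff_sum, Finset.sum_eq_zero hH, add_zero]
    have hg' : g ∈ ord.supportedLE m := by
      rw [show g = f - ∑ h ∈ H, q h • h by rw [hfq, add_sub_cancel_right]]
      exact Submodule.sub_mem _ (ord.mem_supportedLE_of_lmo_eq hm) (Submodule.sum_mem _ hq)
    have hlm := ord.lmo_eq_of_mem_supportedLE hg' (mem_suppF_iff.2 (hgm ▸ hfm))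
    rw [← ord.lmVec_eq hlm]
    exact Submodule.mem_sup_right (ord.lmVec_mem_lmSub hg (by rintro rfl; simp at hlm))

theorem span_lmVec_sup_lmSub_le {U V : Submodule (MvPolynomial (Fin n) k) (FreeMod k n d)}
    (hUV : U ≤ V) {H : Set (FreeMod k n d)} (hHVU : H ⊆ (V : Set (FreeMod k n d)) \ U) :
    Submodule.span (MvPolynomial (Fin n) k) (ord.lmVec '' H) ⊔ ord.lmSub U ≤ ord.lmSub V := by
  refine sup_le (Submodule.span_le.2 ?_) (ord.lmSub_mono hUV)
  rintro _ ⟨h, hh, rfl⟩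
  exact ord.lmVec_mem_lmSub (hHVU hh).1 fun h0 => (hHVU hh).2 (h0 ▸ U.zero_mem)

end ModMonOrder

theorem span_union_eq_of_hasRelStdRep {ord : ModMonOrder n d}
    {U V : Submodule (MvPolynomial (Fin n) k) (FreeMod k n d)} (hUV : U ≤ V)
    {G H : Finset (FreeMod k n d)} (hG : Submodule.span (MvPolynomial (Fin n) k) ↑G = U)
    (hHV : ∀ h ∈ H, h ∈ V) (hrep : ∀ f ∈ V, HasRelStdRep ord U H f) :
    Submodule.span (MvPolynomial (Fin n) k) ↑(H ∪ G) = V := by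
  rw [Finset.coe_union, Submodule.span_union, hG]
  refine le_antisymm (sup_le (Submodule.span_le.2 hHV) hUV) fun f hf => ?_
  obtain ⟨g, hg, q, rfl, -⟩ := hrep f hf
  exact add_mem (Submodule.mem_sup_right hg) (Submodule.mem_sup_left
    (Submodule.sum_mem _ fun h hh => Submodule.smul_mem _ _ (Submodule.subset_span hh)))

end RelativeGroebner

/-- Characterizations of relative Gröbner bases: let `G` be a Gröbner basis of `U` and
`H ⊆ V ∖ U` a finite set whose elements are supported on module monomials outside `lm(U)`.
Then `H` is a Gröbner basis of `V` relative to `U` iff `H ∪ G` is a Gröbner basis of `V`,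
iff every `f ∈ V` has a relative standard representation `f = g + Σ q_h h`. -/
theorem relative_groebner_basis_tfae {k : Type*} [Field k] {n d : ℕ}
    (ord : ModMonOrder n d)
    (U V : Submodule (MvPolynomial (Fin n) k) (FreeMod k n d))
    (hUV : U ≤ V)
    (G : Finset (FreeMod k n d)) (hG : IsGB ord U G)
    (H : Finset (FreeMod k n d))
    (hHVU : (H : Set (FreeMod k n d)) ⊆ (V : Set (FreeMod k n d)) \ (U : Set (FreeMod k n d)))
    (hHsupp : ∀ h ∈ H, ∀ m ∈ suppF h, mmVec m ∉ ord.lmSub U) :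
    (IsRelGB ord U V H ↔ IsGB ord V (H ∪ G)) ∧
    (IsRelGB ord U V H ↔
      ∀ f ∈ V, ∃ g ∈ U, ∃ q : FreeMod k n d → MvPolynomial (Fin n) k,
        f = g + ∑ h ∈ H, q h • h ∧
        ∀ h ∈ H, q h ≠ 0 → ord.leB (ord.lmo (q h • h)) (ord.lmo f)) := by
  have hGU : ∀ s ∈ G, s ∈ U := fun s hs => hG.1 ▸ Submodule.subset_span hs
  have hHV : ∀ h ∈ H, h ∈ V := fun h hh => (hHVU hh).1
  have hlm : Submodule.span (MvPolynomial (Fin n) k) (ord.lmVec '' ↑(H ∪ G)) =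
      Submodule.span (MvPolynomial (Fin n) k) (ord.lmVec '' ↑H) ⊔ ord.lmSub U := by
    rw [Finset.coe_union, Set.image_union, Submodule.span_union, hG.2]
  have hrep : IsRelGB ord U V H ↔ ∀ f ∈ V, HasRelStdRep ord U H f :=
    ⟨fun hA _ => ord.hasRelStdRep_of_lmSub_le hUV hGU hHV (hlm ▸ hA.2.2.ge),
      fun hC => ⟨hHVU, hHsupp, le_antisymm (ord.span_lmVec_sup_lmSub_le hUV hHVU)
        (ord.lmSub_le_of_hasRelStdRep hC)⟩⟩
  refine ⟨⟨fun hA => ⟨span_union_eq_of_hasRelStdRep hUV hG.1 hHV (hrep.1 hA), hlm.trans hA.2.2⟩,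
    fun hB => ⟨hHVU, hHsupp, hlm ▸ hB.2⟩⟩, hrep⟩
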